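/- For every x in [0,1] and every natural number i > 0, f((2 + x) / 3^i) = (2/3)^i · f(x) + 2^(i-1) / 3^i. -/

import Mathlib

open intervalIntegral Set

/-! `(2 + x) / 3 ^ (n + 1)` is `(2 + x) / 3` shrunk `n` times by the factor `3`; the
first functional equation turns each shrinking into a factor `2/3`, and the third evaluates
`f ((2 + x) / 3)`. -/

lemma div_mem_Icc_of_one_le {r y : ℝ} (hr : 1 ≤ r) (hy : y ∈ Icc (0 : ℝ) 1) :
    y / r ∈ Icc (0 : ℝ) 1 :=
  ⟨div_nonneg hy.1 (by linarith), (div_le_one (by linarith)).2 (hy.2.trans hr)⟩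

lemma apply_div_pow_of_apply_div {f : ℝ → ℝ} {r a : ℝ} (hr : 1 ≤ r)
    (hf : ∀ x ∈ Icc (0 : ℝ) 1, f (x / r) = a * f x) (n : ℕ) :
    ∀ x ∈ Icc (0 : ℝ) 1, f (x / r ^ n) = a ^ n * f x := by
  induction n with
  | zero => simp
  | succ n ih =>
    intro x hx
    have hxn : x / r ^ n ∈ Icc (0 : ℝ) 1 := div_mem_Icc_of_one_le (one_le_pow₀ hr) hx
    rw [pow_succ, ← div_div, hf _ hxn, ih x hx, pow_succ]
    ring

theorem bourbaki_stmt_general (f : ℝ → ℝ)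
    (hw1 : ∀ x ∈ Set.Icc (0:ℝ) 1, f (x / 3) = (2/3) * f x)
    (hw3 : ∀ x ∈ Set.Icc (0:ℝ) 1, f ((2 + x) / 3) = 1/3 + (2/3) * f x) :
    ∀ x ∈ Set.Icc (0:ℝ) 1, ∀ i : ℕ, 0 < i → f ((2 + x) / 3 ^ i) = (2/3) ^ i * f x + 2 ^ (i - 1) / 3 ^ i := by
  intro x hx i hi
  obtain ⟨n, rfl⟩ := Nat.exists_eq_add_of_lt hi
  have hy : (2 + x) / 3 ∈ Icc (0 : ℝ) 1 := ⟨by linarith [hx.1], by linarith [hx.2]⟩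
  have hsplit : (2 + x) / 3 ^ (0 + n + 1) = (2 + x) / 3 / 3 ^ n := by
    rw [zero_add, pow_succ', div_div]
  rw [hsplit, apply_div_pow_of_apply_div (by norm_num) hw1 n _ hy, hw3 x hx,
    Nat.add_sub_cancel, zero_add]
  simp only [div_pow]
  field_simp
  ring

theorem bourbaki_stmt (f : ℝ → ℝ)
    (hcont : ContinuousOn f (Set.Icc 0 1))
    (h0 : f 0 = 0) (h1 : f 1 = 1)
    (hw1 : ∀ x ∈ Set.Icc (0:ℝ) 1, f (x / 3) = (2/3) * f x)
    (hw2 : ∀ x ∈ Set.Icc (0:ℝ) 1, f ((2 - x) / 3) = (1/3) * (1 + f x))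
    (hw3 : ∀ x ∈ Set.Icc (0:ℝ) 1, f ((2 + x) / 3) = 1/3 + (2/3) * f x) :
    ∀ x ∈ Set.Icc (0:ℝ) 1, ∀ i : ℕ, 0 < i → f ((2 + x) / 3 ^ i) = (2/3) ^ i * f x + 2 ^ (i - 1) / 3 ^ i :=
  bourbaki_stmt_general f hw1 hw3
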